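/- Let d > 0, k > 0, γ > 0, h₀ > 0, T_∞ > 0. There exists a unique ν > 0 satisfying h₀T_∞ / (γ√d [1 + (√(dπ) h₀/k) erf(ν)]) = ν e^{ν²}, where erf is the Gauss error function. -/

import Mathlib

/-!
With `c = √(dπ) h₀ / k ≥ 0`, clearing denominators turns the equation into
`ν e^{ν²} (1 + c erf ν) = h₀ T_∞ / (γ √d)`. The left side vanishes at `0`, is continuous, tends to
`∞`, and is strictly increasing on `[0, ∞)` as the product of the nonnegative strictly increasing
`ν e^{ν²}` and the positive nondecreasing `1 + c erf ν`; so it takes every positive value exactly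
once on `(0, ∞)`.
-/

open Real Filter Topology

/-- The Kummer confluent hypergeometric function `M(a,b,z)`, defined by its power series. -/
noncomputable def kummerM (a b z : ℝ) : ℝ :=
  ∑' s : ℕ, ((ascPochhammer ℝ s).eval a / ((ascPochhammer ℝ s).eval b * (Nat.factorial s : ℝ)))
      * z ^ s

/-- The Gauss error function. -/
noncomputable def errorFun (z : ℝ) : ℝ :=
  (2 / Real.sqrt Real.pi) * ∫ u in (0 : ℝ)..z, Real.exp (-u ^ 2)

lemma StrictMonoOn.mul_monotoneOn {α M₀ : Type*} [Preorder α] [Mul M₀] [Zero M₀] [Preorder M₀]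
    [PosMulMono M₀] [MulPosStrictMono M₀] {f g : α → M₀} {s : Set α}
    (hf : StrictMonoOn f s) (hg : MonotoneOn g s)
    (hf₀ : ∀ x ∈ s, 0 ≤ f x) (hg₀ : ∀ x ∈ s, 0 < g x) : StrictMonoOn (f * g) s :=
  fun _ ha _ hb h ↦ mul_lt_mul (hf ha hb h) (hg ha hb h.le) (hg₀ _ ha) (hf₀ _ hb)

lemma StrictMonoOn.existsUnique_pos_eq {g : ℝ → ℝ} (hmono : StrictMonoOn g (Set.Ici 0))
    (hcont : ContinuousOn g (Set.Ici 0)) (h₀ : g 0 = 0) (htop : Tendsto g atTop atTop)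
    {A : ℝ} (hA : 0 < A) : ∃! x, 0 < x ∧ g x = A := by
  obtain ⟨b, hAb, hb⟩ := ((tendsto_atTop.1 htop A).and (eventually_ge_atTop 0)).exists
  obtain ⟨x, hx, hgx⟩ : A ∈ g '' Set.Icc 0 b :=
    intermediate_value_Icc hb (hcont.mono Set.Icc_subset_Ici_self) (by rw [h₀]; exact ⟨hA.le, hAb⟩)
  have hx₀ : 0 < x := hx.1.lt_of_ne (by rintro rfl; exact hA.ne' (hgx ▸ h₀))
  exact ⟨x, ⟨hx₀, hgx⟩, fun y ⟨hy, hgy⟩ ↦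
    hmono.injOn (Set.mem_Ici.2 hy.le) (Set.mem_Ici.2 hx₀.le) (hgy.trans hgx.symm)⟩

lemma strictMonoOn_mul_exp_sq : StrictMonoOn (fun x : ℝ ↦ x * exp (x ^ 2)) (Set.Ici 0) :=
  strictMonoOn_id.mul_monotoneOn
    (fun _ ha _ _ h ↦ exp_le_exp.2 (pow_le_pow_left₀ ha h 2))
    (fun _ ha ↦ ha) (fun _ _ ↦ exp_pos _)

@[fun_prop]
lemma continuous_errorFun : Continuous errorFun :=
  continuous_const.mul <| intervalIntegral.continuous_primitive
    (fun a b ↦ (by fun_prop : Continuous fun u : ℝ ↦ exp (-u ^ 2)).intervalIntegrable a b) 0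

lemma monotone_errorFun : Monotone errorFun := by
  intro a b hab
  have hintegrable (u v : ℝ) :
      IntervalIntegrable (fun u : ℝ ↦ exp (-u ^ 2)) MeasureTheory.volume u v :=
    (by fun_prop : Continuous fun u : ℝ ↦ exp (-u ^ 2)).intervalIntegrable u v
  have hsplit :=
    intervalIntegral.integral_add_adjacent_intervals (hintegrable 0 a) (hintegrable a b)
  have hpos : 0 ≤ ∫ u in a..b, exp (-u ^ 2) :=
    intervalIntegral.integral_nonneg hab fun u _ ↦ (exp_pos _).le
  unfold errorFun
  gcongr
  linarith

lemma errorFun_nonneg {x : ℝ} (hx : 0 ≤ x) : 0 ≤ errorFun x := by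
  simpa [errorFun] using monotone_errorFun hx

lemma one_le_one_add_mul_errorFun {c x : ℝ} (hc : 0 ≤ c) (hx : 0 ≤ x) :
    1 ≤ 1 + c * errorFun x := by
  have := mul_nonneg hc (errorFun_nonneg hx)
  linarith

lemma strictMonoOn_mul_exp_sq_mul_errorFun {c : ℝ} (hc : 0 ≤ c) :
    StrictMonoOn (fun x ↦ x * exp (x ^ 2) * (1 + c * errorFun x)) (Set.Ici 0) :=
  strictMonoOn_mul_exp_sq.mul_monotoneOn
    (fun _ _ _ _ h ↦ by gcongr; exact monotone_errorFun h)
    (fun x hx ↦ mul_nonneg hx (exp_pos _).le)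
    (fun _ hx ↦ zero_lt_one.trans_le (one_le_one_add_mul_errorFun hc hx))

lemma tendsto_mul_exp_sq_mul_errorFun {c : ℝ} (hc : 0 ≤ c) :
    Tendsto (fun x ↦ x * exp (x ^ 2) * (1 + c * errorFun x)) atTop atTop := by
  refine tendsto_atTop_mono' _ ?_ tendsto_id
  filter_upwards [eventually_ge_atTop 0] with x hx
  calc x = x * 1 * 1 := by ring
    _ ≤ x * exp (x ^ 2) * (1 + c * errorFun x) := by
      gcongr
      · exact one_le_exp (sq_nonneg x)
      · exact one_le_one_add_mul_errorFun hc hx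

/-- unique free-boundary coefficient in the case `α = 0` (Tarzia's solution
with zero initial temperature). -/
theorem exists_unique_nu_alpha_zero (d k γ h₀ Tinf : ℝ)
    (hd : 0 < d) (hk : 0 < k) (hγ : 0 < γ) (hh : 0 < h₀) (hT : 0 < Tinf) :
    ∃! ν : ℝ, 0 < ν ∧
      h₀ * Tinf / (γ * Real.sqrt d * (1 + (Real.sqrt (d * Real.pi) * h₀ / k) * errorFun ν))
        = ν * Real.exp (ν ^ 2) := by
  set c := Real.sqrt (d * Real.pi) * h₀ / k
  have hc : 0 ≤ c := by positivity
  have hB : 0 < γ * Real.sqrt d := by positivity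
  have hequiv (ν : ℝ) (hν : 0 < ν) :
      h₀ * Tinf / (γ * Real.sqrt d * (1 + c * errorFun ν)) = ν * exp (ν ^ 2) ↔
        ν * exp (ν ^ 2) * (1 + c * errorFun ν) = h₀ * Tinf / (γ * Real.sqrt d) := by
    have hD := zero_lt_one.trans_le (one_le_one_add_mul_errorFun hc hν.le)
    rw [div_eq_iff (by positivity), eq_div_iff hB.ne', eq_comm]
    ring_nf
  have hunique := (strictMonoOn_mul_exp_sq_mul_errorFun hc).existsUnique_pos_eq
    (by fun_prop) (by simp)
    (tendsto_mul_exp_sq_mul_errorFun hc) (by positivity : 0 < h₀ * Tinf / (γ * Real.sqrt d))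
  exact (existsUnique_congr fun ν ↦ and_congr_right (hequiv ν)).2 hunique
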